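/- arXiv:2510.00020 — 9 statements merged into one kernel-verified Lean document; each statement's English description precedes it below -/
import Mathlib

section
/- If the polynomial K_{a,n}(x) = x^n + (1-x)^n + a^n has a rational root for some rational a ≠ -1 and positive integer n, then there exist integers X, Y, Z with XYZ ≠ 0 and an integer m > 2 such that X^m + Y^m = Z^m. -/
/-!
Since `x` and `1 - x` cannot both vanish, the equation `x ^ n + (1 - x) ^ n + a ^ n = 0` forces `n`
to be odd, and then `a ≠ -1` rules out `n = 1`. For odd `n` the equation reads
`x ^ n + (1 - x) ^ n = (-a) ^ n`, and `u ^ n + v ^ n = 0` only when `u = -v`; this keeps `x`, `1 - x`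
and `-a` away from zero, so they are a nontrivial rational solution of Fermat's equation of degree
`n ≥ 3`. Clearing denominators turns it into an integer one.
-/

section LinearOrderedRing

variable {R : Type*} [CommRing R] [LinearOrder R] [IsStrictOrderedRing R] {n : ℕ}

lemma Even.eq_zero_of_pow_add_pow_add_pow_eq_zero (hn : Even n) {x y z : R}
    (h : x ^ n + y ^ n + z ^ n = 0) : x = 0 ∧ y = 0 ∧ z = 0 := by
  have hx := hn.pow_nonneg x
  have hy := hn.pow_nonneg y
  have hz := hn.pow_nonneg z
  exact ⟨eq_zero_of_pow_eq_zero (by linarith), eq_zero_of_pow_eq_zero (by linarith),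
    eq_zero_of_pow_eq_zero (by linarith)⟩

lemma Odd.add_eq_zero_of_pow_add_pow_eq_zero (hn : Odd n) {u v : R} (h : u ^ n + v ^ n = 0) :
    u + v = 0 := by
  rw [← eq_neg_iff_add_eq_zero, ← hn.pow_inj, hn.neg_pow, eq_neg_iff_add_eq_zero, h]

lemma odd_of_pow_add_one_sub_pow_add_pow_eq_zero {x a : R} (h : x ^ n + (1 - x) ^ n + a ^ n = 0) :
    Odd n := by
  refine Nat.not_even_iff_odd.mp fun hn ↦ ?_
  obtain ⟨hx, hx', -⟩ := hn.eq_zero_of_pow_add_pow_add_pow_eq_zero h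
  simp [hx] at hx'

lemma Odd.not_fermatLastTheoremWith_of_pow_add_one_sub_pow_add_pow_eq_zero (hn : Odd n) {x a : R}
    (ha : a ≠ -1) (h : x ^ n + (1 - x) ^ n + a ^ n = 0) : ¬ FermatLastTheoremWith R n := by
  have hn0 : n ≠ 0 := hn.pos.ne'
  intro hflt
  refine hflt x (1 - x) (-a) ?_ ?_ ?_ (by rw [hn.neg_pow]; linear_combination h)
  · rintro rfl
    have h1a := hn.add_eq_zero_of_pow_add_pow_eq_zero (u := (1 : R)) (by simpa [hn0] using h)
    exact ha (by linear_combination h1a)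
  · intro hx
    have hxa := hn.add_eq_zero_of_pow_add_pow_eq_zero (by simpa [hx, hn0] using h)
    exact ha (by linear_combination hxa + hx)
  · intro ha0
    rw [neg_eq_zero] at ha0
    have hsum := hn.add_eq_zero_of_pow_add_pow_eq_zero (by simpa [ha0, hn0] using h)
    exact one_ne_zero (by linear_combination hsum)

end LinearOrderedRing

theorem stmt_0
    (h : ∃ (a : ℚ) (n : ℕ), a ≠ -1 ∧ 0 < n ∧ ∃ x : ℚ, x ^ n + (1 - x) ^ n + a ^ n = 0) :
    ∃ (X Y Z : ℤ) (m : ℕ), 2 < m ∧ X * Y * Z ≠ 0 ∧ X ^ m + Y ^ m = Z ^ m := by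
  obtain ⟨a, n, ha, -, x, hx⟩ := h
  have hodd := odd_of_pow_add_one_sub_pow_add_pow_eq_zero hx
  have hn : 2 < n := by
    obtain ⟨k, rfl⟩ := hodd
    rcases k with _ | k
    · exact absurd (by linear_combination hx) ha
    · omega
  have hflt := hodd.not_fermatLastTheoremWith_of_pow_add_one_sub_pow_add_pow_eq_zero ha hx
  replace hflt := mt ((fermatLastTheoremWith_nat_int_rat_tfae n).out 1 2).mp hflt
  simp only [FermatLastTheoremWith, not_forall, not_not] at hflt
  obtain ⟨X, Y, Z, hX, hY, hZ, hXYZ⟩ := hflt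
  exact ⟨X, Y, Z, n, hn, by positivity, hXYZ⟩
end

section
/- If |a| ≤ 1/2, then every complex root of K_{a,n}(x) = x^n + (1-x)^n + a^n lies on the vertical line Re(x) = 1/2. -/
/-!
With `u = (1 - z) / z` we have `1 + u = 1 / z`, so `z` is a root of `x ^ n + (1 - x) ^ n + b`
exactly when `u` is a root of `P(u) = u ^ n + b (1 + u) ^ n + 1`, and `Re z = 1 / 2` exactly when
`|u| = 1`. On the unit circle `P(e^{iθ}) = e^{inθ/2} (2 cos (nθ/2) + b 2ⁿ cosⁿ (θ/2))`; when
`|b| 2ⁿ ≤ 1` the real factor has the sign of `(-1) ^ j` at `θ = 2πj/n`, so it vanishes once in each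
of the `n` arcs between these points. These are `n` distinct roots of `P` on the unit circle, and as
`deg P ≤ n` there are no others.
-/

open Polynomial Real Complex

theorem Polynomial.mem_of_isRoot_of_natDegree_le_card {R : Type*} [CommRing R] [IsDomain R]
    {p : R[X]} (hp : p ≠ 0) {s : Finset R} (hs : ∀ x ∈ s, p.IsRoot x)
    (hcard : p.natDegree ≤ s.card) {x : R} (hx : p.IsRoot x) : x ∈ s := by
  classical
  by_contra hxs
  refine hp (eq_zero_of_natDegree_lt_card_of_eval_eq_zero' p (insert x s) ?_ ?_)
  · exact fun y hy ↦ (Finset.mem_insert.mp hy).elim (· ▸ hx) (hs y)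
  · rw [Finset.card_insert_of_notMem hxs]; omega

theorem Complex.one_add_exp_mul_I (θ : ℝ) :
    1 + cexp (θ * I) = cexp ((θ / 2 : ℝ) * I) * (2 * Real.cos (θ / 2) : ℝ) := by
  push_cast
  rw [Complex.two_cos, mul_add, ← Complex.exp_add, ← Complex.exp_add]
  ring_nf
  simp [add_comm]

theorem Complex.re_eq_half_of_norm_one_sub_div_eq_one {z : ℂ} (h : ‖(1 - z) / z‖ = 1) :
    z.re = 1 / 2 := by
  have hz : z ≠ 0 := by rintro rfl; simp at h
  rw [norm_div, div_eq_one_iff_eq (norm_ne_zero_iff.mpr hz),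
    ← sq_eq_sq₀ (norm_nonneg _) (norm_nonneg _), Complex.sq_norm, Complex.sq_norm,
    Complex.normSq_apply, Complex.normSq_apply] at h
  simp only [Complex.sub_re, Complex.sub_im, Complex.one_re, Complex.one_im] at h
  linarith

theorem exists_mem_Ioo_eq_zero_of_mul_neg {f : ℝ → ℝ} {x y : ℝ} (hxy : x ≤ y)
    (hf : ContinuousOn f (Set.Icc x y)) (h : f x * f y < 0) : ∃ θ ∈ Set.Ioo x y, f θ = 0 := by
  rcases mul_neg_iff.mp h with ⟨hx, hy⟩ | ⟨hx, hy⟩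
  · exact intermediate_value_Ioo' hxy hf ⟨hy, hx⟩
  · exact intermediate_value_Ioo hxy hf ⟨hx, hy⟩

noncomputable def circlePoly {R : Type*} [CommRing R] (n : ℕ) (b : R) : R[X] :=
  X ^ n + C b * (1 + X) ^ n + 1

noncomputable def circleFactor (n : ℕ) (b θ : ℝ) : ℝ :=
  2 * Real.cos (n * θ / 2) + b * 2 ^ n * Real.cos (θ / 2) ^ n

section CirclePoly

variable {R : Type*} [CommRing R]

theorem natDegree_circlePoly_le (n : ℕ) (b : R) : (circlePoly n b).natDegree ≤ n := by
  unfold circlePoly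
  compute_degree

theorem circlePoly_ne_zero {n : ℕ} {b : R} (hn : n ≠ 0) (hb : b + 1 ≠ 0) : circlePoly n b ≠ 0 := by
  intro h
  apply hb
  simpa [circlePoly, hn] using congrArg (eval 0) h

end CirclePoly

theorem isRoot_circlePoly_one_sub_div {K : Type*} [Field K] {n : ℕ} {b z : K} (hz : z ≠ 0)
    (h : z ^ n + (1 - z) ^ n + b = 0) : (circlePoly n b).IsRoot ((1 - z) / z) := by
  have h1 : 1 + (1 - z) / z = z⁻¹ := by field_simp; ring
  have : (circlePoly n b).eval ((1 - z) / z) * z ^ n = z ^ n + (1 - z) ^ n + b := by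
    simp only [circlePoly, eval_add, eval_mul, eval_pow, eval_one, eval_X, eval_C, h1]
    rw [add_mul, add_mul, mul_assoc, ← mul_pow, ← mul_pow, inv_mul_cancel₀ hz,
      div_mul_cancel₀ _ hz, one_pow]
    ring
  simpa [h, hz] using this

theorem eval_circlePoly_exp_mul_I (n : ℕ) (b θ : ℝ) :
    (circlePoly n (b : ℂ)).eval (cexp (θ * I)) =
      cexp ((n * θ / 2 : ℝ) * I) * circleFactor n b θ := by
  have h1 : 1 + cexp ((n * θ : ℝ) * I) =
      cexp ((n * θ / 2 : ℝ) * I) * (2 * Real.cos (n * θ / 2) : ℝ) := by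
    simpa using one_add_exp_mul_I (n * θ)
  have h2 : (1 + cexp (θ * I)) ^ n =
      cexp ((n * θ / 2 : ℝ) * I) * (2 ^ n * Real.cos (θ / 2) ^ n : ℝ) := by
    rw [one_add_exp_mul_I, mul_pow, ← Complex.exp_nat_mul]
    push_cast
    ring_nf
  have h3 : cexp (θ * I) ^ n = cexp ((n * θ : ℝ) * I) := by
    rw [← Complex.exp_nat_mul]; push_cast; ring_nf
  simp only [circlePoly, circleFactor, eval_add, eval_mul, eval_pow, eval_one, eval_X, eval_C,
    h2, h3]
  push_cast at h1 ⊢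
  linear_combination h1

section CircleFactor

variable {n : ℕ} {b : ℝ}

theorem continuous_circleFactor (n : ℕ) (b : ℝ) : Continuous (circleFactor n b) := by
  unfold circleFactor; fun_prop

theorem neg_one_pow_mul_circleFactor_pos (hn : n ≠ 0) (hb : |b| * 2 ^ n ≤ 1) (j : ℕ) :
    0 < (-1) ^ j * circleFactor n b (2 * π * j / n) := by
  have hcos : Real.cos (n * (2 * π * j / n) / 2) = (-1) ^ j := by
    rw [show n * (2 * π * j / n) / 2 = j * π by field_simp]
    exact Real.cos_nat_mul_pi j
  have hbound : |(-1) ^ j * (b * 2 ^ n * Real.cos (2 * π * j / n / 2) ^ n)| ≤ 1 := by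
    simp only [abs_mul, abs_pow, abs_neg, abs_one, one_pow, one_mul, abs_two]
    exact mul_le_one₀ hb (by positivity) (pow_le_one₀ (abs_nonneg _) (abs_cos_le_one _))
  have hsq : ((-1 : ℝ) ^ j) ^ 2 = 1 := by rw [← pow_mul, mul_comm, pow_mul]; norm_num
  have hexpand : (-1) ^ j * circleFactor n b (2 * π * j / n) =
      2 + (-1) ^ j * (b * 2 ^ n * Real.cos (2 * π * j / n / 2) ^ n) := by
    rw [circleFactor, hcos]; linear_combination 2 * hsq
  linarith [(abs_le.mp hbound).1]

theorem exists_circleFactor_eq_zero (hn : n ≠ 0) (hb : |b| * 2 ^ n ≤ 1) (j : ℕ) :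
    ∃ θ ∈ Set.Ioo (2 * π * j / n) (2 * π * (j + 1) / n), circleFactor n b θ = 0 := by
  have hle : 2 * π * j / n ≤ 2 * π * (j + 1) / n := by gcongr; linarith
  refine exists_mem_Ioo_eq_zero_of_mul_neg hle (continuous_circleFactor n b).continuousOn ?_
  have h := mul_pos (neg_one_pow_mul_circleFactor_pos hn hb j)
    (neg_one_pow_mul_circleFactor_pos hn hb (j + 1))
  push_cast at h
  rcases neg_one_pow_eq_or ℝ j with hj | hj <;> rw [pow_succ, hj] at h <;> linarith

end CircleFactor

theorem exists_finset_isRoot_circlePoly {n : ℕ} {b : ℝ} (hn : n ≠ 0) (hb : |b| * 2 ^ n ≤ 1) :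
    ∃ s : Finset ℂ, s.card = n ∧ ∀ w ∈ s, ‖w‖ = 1 ∧ (circlePoly n (b : ℂ)).IsRoot w := by
  choose θ hθ hθroot using exists_circleFactor_eq_zero hn hb
  have hmono : StrictMono θ := strictMono_nat_of_lt_succ fun j ↦
    (hθ j).2.trans (by simpa using (hθ (j + 1)).1)
  have hmem : ∀ j ∈ Finset.range n, θ j ∈ Set.Ico 0 (2 * π) := by
    intro j hj
    have hj : (j : ℝ) + 1 ≤ n := by exact_mod_cast Finset.mem_range.mp hj
    refine ⟨(by positivity : (0 : ℝ) ≤ _).trans (hθ j).1.le, (hθ j).2.trans_le ?_⟩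
    rw [div_le_iff₀ (by positivity)]
    nlinarith [pi_pos]
  refine ⟨(Finset.range n).image fun j ↦ cexp (θ j * I), ?_, ?_⟩
  · rw [Finset.card_image_of_injOn, Finset.card_range]
    intro i hi j hj hij
    refine hmono.injective (Circle.exp_injOn_Ico (by simp) (hmem i hi) (hmem j hj) ?_)
    simpa [Circle.ext_iff] using hij
  · simp only [Finset.mem_image, forall_exists_index, and_imp]
    rintro _ j - rfl
    refine ⟨Complex.norm_exp_ofReal_mul_I _, ?_⟩
    simp [IsRoot, eval_circlePoly_exp_mul_I, hθroot]

theorem norm_eq_one_of_isRoot_circlePoly {n : ℕ} {b : ℝ} (hn : n ≠ 0) (hb : |b| * 2 ^ n ≤ 1)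
    {u : ℂ} (hu : (circlePoly n (b : ℂ)).IsRoot u) : ‖u‖ = 1 := by
  obtain ⟨s, hcard, hs⟩ := exists_finset_isRoot_circlePoly hn hb
  have hb1 : (b : ℂ) + 1 ≠ 0 := by
    have hlt : |b| < 1 := by nlinarith [abs_nonneg b, one_lt_pow₀ (one_lt_two : (1 : ℝ) < 2) hn]
    intro h
    have : b + 1 = 0 := by exact_mod_cast h
    linarith [neg_abs_le b]
  have hne := circlePoly_ne_zero hn hb1
  exact (hs u (Polynomial.mem_of_isRoot_of_natDegree_le_card hne (fun w hw ↦ (hs w hw).2)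
    ((natDegree_circlePoly_le n _).trans hcard.ge) hu)).1

theorem stmt_3 (a : ℝ) (ha : |a| ≤ 1 / 2) (n : ℕ) (hn : 1 ≤ n)
    (z : ℂ) (hz : z ^ n + (1 - z) ^ n + (a : ℂ) ^ n = 0) :
    z.re = 1 / 2 := by
  have hb : |a ^ n| * 2 ^ n ≤ 1 := by
    rw [abs_pow, ← mul_pow]
    exact pow_le_one₀ (by positivity) (by linarith)
  have hz0 : z ≠ 0 := by
    rintro rfl
    have han : |a ^ n| ≤ 1 / 2 := by
      rw [abs_pow]; exact (pow_le_of_le_one (abs_nonneg a) (by linarith) (by omega)).trans ha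
    have h : (1 : ℂ) + a ^ n = 0 := by simpa [zero_pow (by omega : n ≠ 0)] using hz
    have : 1 + a ^ n = 0 := by exact_mod_cast h
    linarith [neg_abs_le (a ^ n)]
  apply re_eq_half_of_norm_one_sub_div_eq_one
  refine norm_eq_one_of_isRoot_circlePoly (b := a ^ n) (by omega) hb ?_
  exact_mod_cast isRoot_circlePoly_one_sub_div hz0 hz
end

section
/- Let K_n(x) = x^n + (1-x)^n + (-1)^n ∈ ℤ[x] and let G = gcd(K_n, K_n') in ℚ[x]. Then G divides x^{n-1} + (-1)^n in ℚ[x]. -/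
/-! With `K = X ^ n + (1 - X) ^ n + (-1) ^ n` one has the identity
`n (X ^ (n - 1) + (-1) ^ n) = n K + (1 - X) K'`, so every common divisor of `K` and `K'`
divides `n (X ^ (n - 1) + (-1) ^ n)`, and `n` is a unit over `ℚ`. -/

open Polynomial

theorem natCast_mul_X_pow_pred_add_neg_one_pow {R : Type*} [CommRing R] (n : ℕ) :
    (n : R[X]) * (X ^ (n - 1) + C (-1) ^ n) =
      (n : R[X]) * (X ^ n + (1 - X) ^ n + C (-1) ^ n) +
        (1 - X) * derivative (X ^ n + (1 - X) ^ n + C (-1) ^ n) := by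
  cases n with
  | zero => simp
  | succ k =>
    simp only [derivative_add, derivative_pow, derivative_sub, derivative_one, derivative_X,
      derivative_C, map_natCast, Nat.add_sub_cancel]
    ring

open Polynomial in
theorem stmt_5 (n : ℕ) (hn : 2 ≤ n) :
    gcd (X ^ n + (1 - X) ^ n + C ((-1 : ℚ)) ^ n)
        (Polynomial.derivative (X ^ n + (1 - X) ^ n + C ((-1 : ℚ)) ^ n)) ∣
      X ^ (n - 1) + C ((-1 : ℚ)) ^ n := by
  have hunit : IsUnit (n : ℚ[X]) := by
    rw [← C_eq_natCast, isUnit_C, isUnit_iff_ne_zero]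
    exact Nat.cast_ne_zero.mpr (by omega)
  rw [← hunit.dvd_mul_left, natCast_mul_X_pow_pred_add_neg_one_pow]
  exact dvd_add ((gcd_dvd_left _ _).mul_left _) ((gcd_dvd_right _ _).mul_left _)
end

section
/- Let ω = e^{iπ/3} and K_n(x) = x^n + (1-x)^n + (-1)^n. Then: if n ≡ 0 mod 3 then K_n(ω) ≠ 0; if n ≡ 2 mod 3 then ω is a simple root of K_n; and if n ≡ 1 mod 3 then ω is a root of K_n of multiplicity exactly 2. -/
/-!
Put `ζ = exp (π i / 3)`, so that `ζ² - ζ + 1 = 0`. Then `1 - ζ` is the other root of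
`X² - X + 1`, and `ζ`, `1 - ζ` and `-1` are all cube roots of `-1`. Hence each of
`ζᵏ ± (1 - ζ)ᵏ` and `(-1)ᵏ` only changes by the sign `(-1)^(k / 3)` when `k` is reduced
modulo `3`, and `K_n(ζ)`, `K_n'(ζ)`, `K_n''(ζ)` reduce to the cases `n ∈ {0, 1, 2}`.
The multiplicity is then read off from the first non-vanishing derivative.
-/

open Polynomial

namespace Polynomial

variable {R : Type*} [CommRing R]

theorem rootMultiplicity_eq_of_isRoot_iterate_derivative [NoZeroDivisors R] [CharZero R]
    {p : R[X]} {t : R} {n : ℕ} (hroot : ∀ m < n, (derivative^[m] p).IsRoot t)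
    (hn : ¬ (derivative^[n] p).IsRoot t) : p.rootMultiplicity t = n := by
  have hp : p ≠ 0 := by
    rintro rfl
    exact hn (by simp)
  refine le_antisymm (not_lt.mp fun h ↦ hn ?_) ?_
  · exact (lt_rootMultiplicity_iff_isRoot_iterate_derivative hp).mp h n le_rfl
  · cases n with
    | zero => exact Nat.zero_le _
    | succ k =>
      exact lt_rootMultiplicity_of_isRoot_iterate_derivative hp fun m hm ↦
        hroot m (Nat.lt_succ_of_le hm)

theorem derivative_X_pow_add_one_sub_X_pow (k : ℕ) :
    derivative ((X : R[X]) ^ k + (1 - X) ^ k) = C (k : R) * (X ^ (k - 1) - (1 - X) ^ (k - 1)) := by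
  simp only [derivative_add, derivative_pow, derivative_X, derivative_sub, derivative_one]
  ring

theorem derivative_X_pow_sub_one_sub_X_pow (k : ℕ) :
    derivative ((X : R[X]) ^ k - (1 - X) ^ k) = C (k : R) * (X ^ (k - 1) + (1 - X) ^ (k - 1)) := by
  simp only [derivative_sub, derivative_pow, derivative_X, derivative_one]
  ring

end Polynomial

section CubeRootsOfNegOne

variable {R : Type*} [CommRing R]

theorem pow_eq_neg_one_pow_div_three_mul_pow_mod_three {x : R} (hx : x ^ 3 = -1) (k : ℕ) :
    x ^ k = (-1) ^ (k / 3) * x ^ (k % 3) := by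
  conv_lhs => rw [← Nat.div_add_mod k 3, pow_add, pow_mul, hx]

variable {ζ : R} (hζ : ζ ^ 2 - ζ + 1 = 0)
include hζ

theorem pow_three_eq_neg_one_of_sq_sub_add_one_eq_zero : ζ ^ 3 = -1 := by
  linear_combination (ζ + 1) * hζ

theorem one_sub_pow_three_eq_neg_one_of_sq_sub_add_one_eq_zero : (1 - ζ) ^ 3 = -1 := by
  linear_combination (2 - ζ) * hζ

end CubeRootsOfNegOne

noncomputable def kPoly (R : Type*) [CommRing R] (n : ℕ) : R[X] :=
  X ^ n + (1 - X) ^ n + C (-1) ^ n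

namespace kPoly

section CommRing

variable {R : Type*} [CommRing R]

theorem derivative (n : ℕ) :
    Polynomial.derivative (kPoly R n) = C (n : R) * (X ^ (n - 1) - (1 - X) ^ (n - 1)) := by
  rw [kPoly, ← C_pow, Polynomial.derivative_add, derivative_C, add_zero,
    derivative_X_pow_add_one_sub_X_pow]

theorem derivative_derivative (n : ℕ) :
    Polynomial.derivative (Polynomial.derivative (kPoly R n)) =
      C ((n * (n - 1) : ℕ) : R) * (X ^ (n - 2) + (1 - X) ^ (n - 2)) := by
  rw [derivative, derivative_mul, derivative_C, zero_mul, zero_add,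
    derivative_X_pow_sub_one_sub_X_pow, ← mul_assoc, ← C_mul, Nat.sub_sub, Nat.cast_mul]

variable {ζ : R} (hζ : ζ ^ 2 - ζ + 1 = 0)
include hζ

theorem eval_eq (n : ℕ) : (kPoly R n).eval ζ =
    (-1) ^ (n / 3) * (ζ ^ (n % 3) + (1 - ζ) ^ (n % 3) + (-1) ^ (n % 3)) := by
  simp only [kPoly, eval_add, eval_pow, eval_sub, eval_one, eval_X, eval_C]
  rw [pow_eq_neg_one_pow_div_three_mul_pow_mod_three
      (pow_three_eq_neg_one_of_sq_sub_add_one_eq_zero hζ) n,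
    pow_eq_neg_one_pow_div_three_mul_pow_mod_three
      (one_sub_pow_three_eq_neg_one_of_sq_sub_add_one_eq_zero hζ) n,
    pow_eq_neg_one_pow_div_three_mul_pow_mod_three (by norm_num : (-1 : R) ^ 3 = -1) n]
  ring

theorem eval_derivative_eq (n : ℕ) : (Polynomial.derivative (kPoly R n)).eval ζ =
    n * (-1) ^ ((n - 1) / 3) * (ζ ^ ((n - 1) % 3) - (1 - ζ) ^ ((n - 1) % 3)) := by
  simp only [derivative, eval_mul, eval_C, eval_pow, eval_sub, eval_one, eval_X]
  rw [pow_eq_neg_one_pow_div_three_mul_pow_mod_three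
      (pow_three_eq_neg_one_of_sq_sub_add_one_eq_zero hζ) (n - 1),
    pow_eq_neg_one_pow_div_three_mul_pow_mod_three
      (one_sub_pow_three_eq_neg_one_of_sq_sub_add_one_eq_zero hζ) (n - 1)]
  ring

theorem eval_derivative_derivative_eq (n : ℕ) :
    (Polynomial.derivative (Polynomial.derivative (kPoly R n))).eval ζ =
      ((n * (n - 1) : ℕ) : R) * (-1) ^ ((n - 2) / 3) *
        (ζ ^ ((n - 2) % 3) + (1 - ζ) ^ ((n - 2) % 3)) := by
  simp only [derivative_derivative, eval_mul, eval_C, eval_pow, eval_add, eval_sub, eval_one,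
    eval_X]
  rw [pow_eq_neg_one_pow_div_three_mul_pow_mod_three
      (pow_three_eq_neg_one_of_sq_sub_add_one_eq_zero hζ) (n - 2),
    pow_eq_neg_one_pow_div_three_mul_pow_mod_three
      (one_sub_pow_three_eq_neg_one_of_sq_sub_add_one_eq_zero hζ) (n - 2)]
  ring

theorem isRoot {n : ℕ} (h : n % 3 ≠ 0) : (kPoly R n).IsRoot ζ := by
  rw [IsRoot, eval_eq hζ]
  obtain h | h : n % 3 = 1 ∨ n % 3 = 2 := by omega
  all_goals rw [h]
  · ring
  · linear_combination 2 * (-1 : R) ^ (n / 3) * hζ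

theorem isRoot_derivative {n : ℕ} (h : n % 3 = 1) :
    (Polynomial.derivative (kPoly R n)).IsRoot ζ := by
  rw [IsRoot, eval_derivative_eq hζ, show (n - 1) % 3 = 0 by omega]
  ring

end CommRing

section Field

variable {F : Type*} [Field F] [CharZero F] {ζ : F} (hζ : ζ ^ 2 - ζ + 1 = 0)
include hζ

theorem eval_ne_zero {n : ℕ} (h : n % 3 = 0) : (kPoly F n).eval ζ ≠ 0 := by
  rw [eval_eq hζ, h]
  norm_num

theorem rootMultiplicity_of_mod_three_eq_two {n : ℕ} (h : n % 3 = 2) :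
    (kPoly F n).rootMultiplicity ζ = 1 := by
  refine rootMultiplicity_eq_of_isRoot_iterate_derivative (fun m hm ↦ ?_) ?_
  · obtain rfl : m = 0 := by omega
    exact isRoot hζ (by omega)
  · have hsq : (2 * ζ - 1) ^ 2 = -3 := by linear_combination 4 * hζ
    have hne : 2 * ζ - 1 ≠ 0 := fun h0 ↦ by norm_num [h0] at hsq
    rw [Function.iterate_one, IsRoot, eval_derivative_eq hζ, show (n - 1) % 3 = 1 by omega,
      show ζ ^ 1 - (1 - ζ) ^ 1 = 2 * ζ - 1 by ring]
    exact mul_ne_zero (mul_ne_zero (Nat.cast_ne_zero.mpr (by omega)) (by simp)) hne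

theorem rootMultiplicity_of_mod_three_eq_one {n : ℕ} (hn : 2 ≤ n) (h : n % 3 = 1) :
    (kPoly F n).rootMultiplicity ζ = 2 := by
  refine rootMultiplicity_eq_of_isRoot_iterate_derivative (fun m hm ↦ ?_) ?_
  · interval_cases m
    exacts [isRoot hζ (by omega), isRoot_derivative hζ h]
  · rw [Function.iterate_succ_apply, Function.iterate_one, IsRoot,
      eval_derivative_derivative_eq hζ, show (n - 2) % 3 = 2 by omega,
      show ζ ^ 2 + (1 - ζ) ^ 2 = -1 by linear_combination 2 * hζ]
    exact mul_ne_zero (mul_ne_zero (Nat.cast_ne_zero.mpr (Nat.mul_ne_zero (by omega) (by omega)))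
      (by simp)) (by simp)

end Field

end kPoly

open Complex in
theorem exp_pi_mul_I_div_three_sq_sub_add_one :
    exp (Real.pi * I / 3) ^ 2 - exp (Real.pi * I / 3) + 1 = 0 := by
  have hω : exp (Real.pi * I / 3) = 1 / 2 + (Real.sqrt 3 / 2 : ℝ) * I := by
    rw [show (Real.pi : ℂ) * I / 3 = (Real.pi / 3 : ℝ) * I by push_cast; ring, exp_mul_I,
      ← ofReal_cos, ← ofReal_sin, Real.cos_pi_div_three, Real.sin_pi_div_three]
    push_cast
    ring
  have hsqrt : ((Real.sqrt 3 : ℝ) : ℂ) ^ 2 = 3 := by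
    norm_cast
    exact Real.sq_sqrt (by norm_num)
  rw [hω]
  push_cast
  linear_combination (I ^ 2 / 4) * hsqrt + (3 / 4 : ℂ) * I_sq

open Polynomial Complex in
theorem stmt_6 (n : ℕ) (hn : 2 ≤ n) :
    (n % 3 = 0 → ((X ^ n + (1 - X) ^ n + C ((-1 : ℂ)) ^ n).eval (Complex.exp (Real.pi * I / 3)) ≠ 0)) ∧
    (n % 3 = 2 → (X ^ n + (1 - X) ^ n + C ((-1 : ℂ)) ^ n).rootMultiplicity (Complex.exp (Real.pi * I / 3)) = 1) ∧
    (n % 3 = 1 → (X ^ n + (1 - X) ^ n + C ((-1 : ℂ)) ^ n).rootMultiplicity (Complex.exp (Real.pi * I / 3)) = 2) :=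
  have hω := exp_pi_mul_I_div_three_sq_sub_add_one
  ⟨kPoly.eval_ne_zero hω, kPoly.rootMultiplicity_of_mod_three_eq_two hω,
    kPoly.rootMultiplicity_of_mod_three_eq_one hω hn⟩
end

section
/- For odd n ≥ 3, the polynomial K_{1,n}(x) = x^n + (1-x)^n + 1 is square-free over ℚ. -/
/-!
Over ℚ, square-free means separable, so it suffices to rule out a common complex root `a` of
`K(x) = x ^ (m + 1) + (1 - x) ^ (m + 1) + 1` and `K' = (m + 1) (x ^ m - (1 - x) ^ m)`, where `m = n - 1`
is even. Substituting `(1 - a) ^ m = a ^ m` into `K(a) = 0` gives `a ^ m = -1`, so `|a| = |1 - a| = 1`,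
which forces `a` to be a primitive sixth root of unity; but then `a ^ (3m) = 1`, while
`a ^ (3m) = (a ^ m) ^ 3 = -1`.
-/

open Polynomial

lemma Complex.norm_eq_one_of_pow_eq_neg_one {z : ℂ} {k : ℕ} (h : z ^ k = -1) : ‖z‖ = 1 := by
  have hk : k ≠ 0 := by
    rintro rfl
    norm_num at h
  refine Complex.norm_eq_one_of_pow_eq_one (n := 2 * k) ?_ (by omega)
  rw [pow_mul', h, neg_one_sq]

lemma Complex.sq_sub_self_add_one_eq_zero {z : ℂ} (h₁ : ‖z‖ = 1) (h₂ : ‖1 - z‖ = 1) :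
    z ^ 2 - z + 1 = 0 := by
  have hz := Complex.mul_conj' z
  have hz' := Complex.mul_conj' (1 - z)
  rw [h₁, Complex.ofReal_one, one_pow] at hz
  rw [h₂, Complex.ofReal_one, one_pow, map_sub, map_one] at hz'
  linear_combination (z - 1) * hz - z * hz'

lemma pow_eq_neg_one_of_pow_eq_one_sub_pow {R : Type*} [CommRing R]
    {a : R} {m : ℕ} (hK : a ^ (m + 1) + (1 - a) ^ (m + 1) + 1 = 0)
    (hK' : a ^ m = (1 - a) ^ m) : a ^ m = -1 := by
  linear_combination hK + (1 - a) * hK'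

lemma derivative_X_pow_add_one_sub_X_pow_add_one {R : Type*} [CommRing R] (m : ℕ) :
    derivative (X ^ (m + 1) + (1 - X) ^ (m + 1) + 1 : R[X])
      = C ((m : R) + 1) * (X ^ m - (1 - X) ^ m) := by
  simp only [derivative_add, derivative_pow, derivative_sub, derivative_one, derivative_X,
    Nat.add_sub_cancel, C_add, C_1, map_natCast, Nat.cast_add, Nat.cast_one]
  ring

lemma Complex.pow_ne_one_sub_pow_of_odd_root {a : ℂ} {k : ℕ}
    (hK : a ^ (2 * k + 1) + (1 - a) ^ (2 * k + 1) + 1 = 0) :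
    a ^ (2 * k) ≠ (1 - a) ^ (2 * k) := by
  intro hK'
  have ha : a ^ (2 * k) = -1 := pow_eq_neg_one_of_pow_eq_one_sub_pow hK hK'
  have hsix : a ^ 2 - a + 1 = 0 :=
    sq_sub_self_add_one_eq_zero (norm_eq_one_of_pow_eq_neg_one ha)
      (norm_eq_one_of_pow_eq_neg_one (hK' ▸ ha))
  have h_one : a ^ (6 * k) = 1 := by
    rw [pow_mul, show a ^ 6 = 1 by linear_combination (a + 1) * (a ^ 3 - 1) * hsix, one_pow]
  have h_neg_one : a ^ (6 * k) = -1 := by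
    rw [show 6 * k = 2 * k * 3 by ring, pow_mul, ha]
    norm_num
  norm_num [h_one] at h_neg_one

theorem stmt_12_general (n : ℕ) (hodd : Odd n) :
    Squarefree (X ^ n + (1 - X) ^ n + 1 : ℚ[X]) := by
  obtain ⟨k, rfl⟩ := hodd
  rw [← PerfectField.separable_iff_squarefree, separable_def,
    derivative_X_pow_add_one_sub_X_pow_add_one, isCoprime_iff_aeval_ne_zero_of_isAlgClosed ℚ ℂ]
  intro a
  rw [or_iff_not_imp_left, not_not]
  intro hK
  simp only [map_add, map_sub, map_mul, map_pow, map_one, aeval_X, aeval_C] at hK ⊢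
  exact mul_ne_zero (Nat.cast_add_one_ne_zero _)
    (sub_ne_zero.mpr (Complex.pow_ne_one_sub_pow_of_odd_root hK))

open Polynomial in
theorem stmt_12 (n : ℕ) (hn : 3 ≤ n) (hodd : Odd n) :
    Squarefree (X ^ n + (1 - X) ^ n + 1 : ℚ[X]) :=
  stmt_12_general n hodd
end

section
/- Let L(x) = x^n + (2-x)^n + c ∈ ℤ[x] where c = ±1 and n ≥ 2. Then L is irreducible over ℤ. (Key step: the leading coefficient of L is 2 if n is even and 2n if n is odd; the reduction of L modulo 2 is the constant 1; hence any factorization must be trivial.) -/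
/-!
Modulo 2 the polynomial reduces to `X ^ n + X ^ n + 1 = 1`, so both factors of a factorization
`A * B` with positive degrees reduce to units of `(ZMod 2)[X]`, i.e. to constants, and therefore
have even leading coefficients. Then 4 would divide the leading coefficient of the product, which
is 2 for even `n` and `2 * n` for odd `n` (where the `X ^ n` terms cancel).
-/

open Polynomial

theorem map_leadingCoeff_eq_zero_of_isUnit_map {R S : Type*} [Semiring R] [Semiring S]
    [NoZeroDivisors S] (f : R →+* S) {P : R[X]} (hP : 0 < P.natDegree)
    (hu : IsUnit (P.map f)) : f P.leadingCoeff = 0 := by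
  rw [leadingCoeff, ← coeff_map]
  exact coeff_eq_zero_of_natDegree_lt (by rw [natDegree_eq_zero_of_isUnit hu]; exact hP)

theorem sq_dvd_leadingCoeff_mul_of_isUnit_map {p : ℕ} [Fact p.Prime] {A B : ℤ[X]}
    (hA : 0 < A.natDegree) (hB : 0 < B.natDegree)
    (hu : IsUnit ((A * B).map (Int.castRingHom (ZMod p)))) :
    (p : ℤ) ^ 2 ∣ (A * B).leadingCoeff := by
  rw [Polynomial.map_mul] at hu
  have hpA := map_leadingCoeff_eq_zero_of_isUnit_map _ hA (isUnit_of_mul_isUnit_left hu)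
  have hpB := map_leadingCoeff_eq_zero_of_isUnit_map _ hB (isUnit_of_mul_isUnit_right hu)
  simp only [eq_intCast, ZMod.intCast_zmod_eq_zero_iff_dvd] at hpA hpB
  rw [leadingCoeff_mul, sq]
  exact mul_dvd_mul hpA hpB

theorem not_exists_mul_eq_of_isUnit_map_of_not_sq_dvd_leadingCoeff {p : ℕ} [Fact p.Prime]
    {P : ℤ[X]} (hu : IsUnit (P.map (Int.castRingHom (ZMod p))))
    (hlc : ¬ (p : ℤ) ^ 2 ∣ P.leadingCoeff) :
    ¬ ∃ A B : ℤ[X], 0 < A.natDegree ∧ 0 < B.natDegree ∧ P = A * B := by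
  rintro ⟨A, B, hA, hB, rfl⟩
  exact hlc (sq_dvd_leadingCoeff_mul_of_isUnit_map hA hB hu)

theorem coeff_two_sub_X_pow (n k : ℕ) :
    (((2 : ℤ[X]) - X) ^ n).coeff k = (-1) ^ n * (-2) ^ (n - k) * (n.choose k : ℤ) := by
  have : (2 : ℤ[X]) - X = C (-1) * (X + C (-2)) := by
    simp only [map_neg, map_one, map_ofNat]; ring
  rw [this, mul_pow, ← C_pow, coeff_C_mul, coeff_X_add_C_pow, mul_assoc]

section

variable (c : ℤ) (n : ℕ)

theorem natDegree_X_pow_add_two_sub_X_pow_add_C_le :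
    (X ^ n + (2 - X) ^ n + C c : ℤ[X]).natDegree ≤ n := by
  compute_degree

theorem coeff_X_pow_add_two_sub_X_pow_add_C_self (hn : n ≠ 0) :
    (X ^ n + (2 - X) ^ n + C c : ℤ[X]).coeff n = 1 + (-1) ^ n := by
  rw [coeff_add, coeff_add, coeff_X_pow_self, coeff_two_sub_X_pow, coeff_C, if_neg hn,
    Nat.sub_self, Nat.choose_self]
  ring

theorem coeff_X_pow_add_two_sub_X_pow_add_C_pred (hn : 2 ≤ n) :
    (X ^ n + (2 - X) ^ n + C c : ℤ[X]).coeff (n - 1) = (-1) ^ (n + 1) * 2 * n := by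
  have hsub : n - (n - 1) = 1 := by omega
  rw [coeff_add, coeff_add, coeff_X_pow, coeff_two_sub_X_pow, coeff_C, if_neg (by omega),
    if_neg (by omega), hsub, Nat.choose_symm_of_eq_add (show n = n - 1 + 1 by omega),
    Nat.choose_one_right]
  ring

theorem leadingCoeff_X_pow_add_two_sub_X_pow_add_C_of_even (hn : n ≠ 0) (he : Even n) :
    (X ^ n + (2 - X) ^ n + C c : ℤ[X]).leadingCoeff = 2 := by
  have hcoeff : (X ^ n + (2 - X) ^ n + C c : ℤ[X]).coeff n = 2 := by
    rw [coeff_X_pow_add_two_sub_X_pow_add_C_self c n hn, he.neg_one_pow]; norm_num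
  rw [leadingCoeff, natDegree_eq_of_le_of_coeff_ne_zero
    (natDegree_X_pow_add_two_sub_X_pow_add_C_le c n) (by rw [hcoeff]; norm_num), hcoeff]

theorem leadingCoeff_X_pow_add_two_sub_X_pow_add_C_of_odd (hn : 2 ≤ n) (ho : Odd n) :
    (X ^ n + (2 - X) ^ n + C c : ℤ[X]).leadingCoeff = 2 * n := by
  have hcoeff : (X ^ n + (2 - X) ^ n + C c : ℤ[X]).coeff (n - 1) = 2 * n := by
    rw [coeff_X_pow_add_two_sub_X_pow_add_C_pred c n hn, ho.add_one.neg_one_pow, one_mul]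
  have hle : (X ^ n + (2 - X) ^ n + C c : ℤ[X]).natDegree ≤ n - 1 :=
    natDegree_le_pred (natDegree_X_pow_add_two_sub_X_pow_add_C_le c n) (by
      rw [coeff_X_pow_add_two_sub_X_pow_add_C_self c n (by omega), ho.neg_one_pow]; norm_num)
  rw [leadingCoeff, natDegree_eq_of_le_of_coeff_ne_zero hle (by rw [hcoeff]; omega), hcoeff]

theorem map_X_pow_add_two_sub_X_pow_add_C_zmod_two (hc : Odd c) :
    (X ^ n + (2 - X) ^ n + C c : ℤ[X]).map (Int.castRingHom (ZMod 2)) = 1 := by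
  have hc2 : Int.castRingHom (ZMod 2) c = 1 := (ZMod.intCast_eq_one_iff_odd).mpr hc
  simp only [Polynomial.map_add, Polynomial.map_pow, Polynomial.map_sub, Polynomial.map_ofNat,
    Polynomial.map_X, map_C, hc2, CharTwo.two_eq_zero, zero_sub, CharTwo.neg_eq,
    CharTwo.add_self_eq_zero, zero_add, map_one]

end

open Polynomial in
theorem stmt_14 (c : ℤ) (hc : c = 1 ∨ c = -1) (n : ℕ) (hn : 2 ≤ n) :
    ¬ ∃ A B : ℤ[X], 0 < A.natDegree ∧ 0 < B.natDegree ∧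
      X ^ n + (2 - X) ^ n + C c = A * B := by
  have hodd : Odd c := by rcases hc with rfl | rfl <;> decide
  refine not_exists_mul_eq_of_isUnit_map_of_not_sq_dvd_leadingCoeff (p := 2) ?_ ?_
  · rw [map_X_pow_add_two_sub_X_pow_add_C_zmod_two c n hodd]
    exact isUnit_one
  · rcases Nat.even_or_odd n with he | ho
    · rw [leadingCoeff_X_pow_add_two_sub_X_pow_add_C_of_even c n (by omega) he]
      norm_num
    · rw [leadingCoeff_X_pow_add_two_sub_X_pow_add_C_of_odd c n hn ho]
      obtain ⟨k, rfl⟩ := ho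
      rintro ⟨t, ht⟩
      push_cast at ht
      omega
end

section
/- Let f ∈ ℤ[x] be a non-constant polynomial satisfying f(1-x) = f(x) and f = f* (f equals its reversal), and let p be a prime. Then either the reduction of f modulo p is zero, or f(x) = c(x²-x+1) for some integer c not divisible by p with p ≡ 2 mod 3, or the reduction of f modulo p is reducible in 𝔽_p[x]. -/
/-!
Suppose `F = f mod p` is nonzero and not reducible. Its constant term is the reduction of the
leading coefficient of `f` and cannot vanish (else `X` splits off, as the symmetry `x ↦ 1 - x`
rules out degree one), so `F` is irreducible of the same degree as `f`. In the finite field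
`𝔽_p[X]/(F)` the class `α` of `X` is mapped by `x ↦ 1 - x` and by `x ↦ x⁻¹` to roots of `F`,
so both substitutions define automorphisms. The Galois group of a
finite field is cyclic, hence the two commute: `(1 - α)⁻¹ = 1 - α⁻¹`, i.e. `α² - α + 1 = 0`.
Thus `F` is associated to `X² - X + 1`, which forces `f = c (X² - X + 1)`, and this quadratic is
irreducible mod `p` only when it has no root, i.e. when `p ≡ 2 mod 3`.
-/

open Polynomial

theorem AlgHom.apply_comm_of_finite {K L : Type*} [Field K] [Field L] [_root_.Finite L]
    [Algebra K L] (σ τ : L →ₐ[K] L) (x : L) : σ (τ x) = τ (σ x) := by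
  let σ' := AlgEquiv.ofBijective σ σ.injective.bijective_of_finite
  let τ' := AlgEquiv.ofBijective τ τ.injective.bijective_of_finite
  let := IsCyclic.commGroup (α := Gal(L/K))
  exact DFunLike.congr_fun (mul_comm σ' τ') x

namespace Polynomial

theorem natDegree_X_sq_sub_X_add_one {R : Type*} [Ring R] [Nontrivial R] :
    (X ^ 2 - X + 1 : R[X]).natDegree = 2 := by
  compute_degree!

theorem reverse_map_of_leadingCoeff_ne_zero {R S : Type*} [Semiring R] [Semiring S] (φ : R →+* S)
    {f : R[X]} (h : φ f.leadingCoeff ≠ 0) : (f.map φ).reverse = f.reverse.map φ := by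
  rw [reverse, natDegree_map_of_leadingCoeff_ne_zero φ h, reflect_map, reverse]

theorem exists_mul_of_coeff_zero_eq_zero {R : Type*} [Semiring R] {F : R[X]}
    (h0 : F.coeff 0 = 0) (h2 : 2 ≤ F.natDegree) :
    ∃ A B : R[X], 0 < A.natDegree ∧ 0 < B.natDegree ∧ F = A * B := by
  have : Nontrivial R := by
    by_contra h
    rw [not_nontrivial_iff_subsingleton] at h
    simp [natDegree_of_subsingleton] at h2
  refine ⟨X, F.divX, by simp, ?_, ?_⟩
  · rw [natDegree_divX_eq_natDegree_tsub_one]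
    omega
  · conv_lhs => rw [← X_mul_divX_add F, h0, C_0, add_zero]

section OneSubX

variable {R : Type*} [CommRing R] {F : R[X]}

theorem eval_one_eq_eval_zero_of_comp_one_sub_X_eq (h : F.comp (1 - X) = F) :
    F.eval 1 = F.eval 0 := by
  conv_rhs => rw [← h]
  simp [eval_comp]

theorem natDegree_ne_one_of_comp_one_sub_X_eq (h : F.comp (1 - X) = F) : F.natDegree ≠ 1 := by
  intro h1
  have he := eval_one_eq_eval_zero_of_comp_one_sub_X_eq h
  rw [eq_X_add_C_of_natDegree_le_one h1.le] at he
  have hlc : F.coeff 1 ≠ 0 := by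
    rw [← h1]
    exact leadingCoeff_ne_zero.mpr (by rintro rfl; simp at h1)
  exact hlc (by simpa using he)

theorem eq_C_mul_X_sq_sub_X_add_one (h : F.comp (1 - X) = F) (hrev : F.reverse = F)
    (h2 : F.natDegree = 2) : F = C F.leadingCoeff * (X ^ 2 - X + 1) := by
  have hF : F = C (F.coeff 0) + C (F.coeff 1) * X + C (F.coeff 2) * X ^ 2 := by
    conv_lhs => rw [F.as_sum_range_C_mul_X_pow, h2]
    simp [Finset.sum_range_succ]
  have h0 : F.coeff 0 = F.leadingCoeff := by rw [← coeff_zero_reverse, hrev]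
  rw [leadingCoeff, h2] at h0 ⊢
  have h1 : F.coeff 1 = -F.coeff 2 := by
    have he := eval_one_eq_eval_zero_of_comp_one_sub_X_eq h
    rw [hF] at he
    simp only [eval_add, eval_mul, eval_C, eval_X, eval_pow] at he
    linear_combination he
  nth_rw 1 [hF]
  rw [h0, h1, C_neg]
  ring

end OneSubX

section Field

variable {k : Type*} [Field k]

theorem isUnit_iff_natDegree_eq_zero {G : k[X]} (hG : G ≠ 0) : IsUnit G ↔ G.natDegree = 0 := by
  rw [isUnit_iff_degree_eq_zero, degree_eq_natDegree hG]
  norm_cast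

theorem irreducible_of_not_exists_mul {F : k[X]} (hF : 0 < F.natDegree)
    (h : ¬ ∃ A B : k[X], 0 < A.natDegree ∧ 0 < B.natDegree ∧ F = A * B) : Irreducible F := by
  refine ⟨not_isUnit_of_natDegree_pos F hF, fun A B hAB => ?_⟩
  by_contra! hu
  have hpos : ∀ G : k[X], G ∣ F → ¬IsUnit G → 0 < G.natDegree := fun G hG hG_unit =>
    Nat.pos_of_ne_zero fun h0 =>
      hG_unit ((isUnit_iff_natDegree_eq_zero (ne_zero_of_dvd_ne_zero
        (ne_zero_of_natDegree_gt hF) hG)).mpr h0)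
  exact h ⟨A, B, hpos A (hAB ▸ dvd_mul_right A B) hu.1, hpos B (hAB ▸ dvd_mul_left B A) hu.2, hAB⟩

theorem associated_X_sq_sub_X_add_one [Finite k] {F : k[X]} (hirr : Irreducible F)
    (hsym : F.comp (1 - X) = F) (hrev : F.reverse = F) : Associated F (X ^ 2 - X + 1) := by
  suffices hdvd : F ∣ X ^ 2 - X + 1 by
    obtain ⟨G, hG⟩ := hdvd
    have hQ0 : (X ^ 2 - X + 1 : k[X]) ≠ 0 :=
      ne_zero_of_natDegree_gt (n := 0) (by rw [natDegree_X_sq_sub_X_add_one]; omega)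
    have hG0 : G ≠ 0 := right_ne_zero_of_mul (hG ▸ hQ0)
    have hdeg := congrArg natDegree hG
    rw [natDegree_X_sq_sub_X_add_one, natDegree_mul hirr.ne_zero hG0] at hdeg
    have := hirr.natDegree_pos
    have := natDegree_ne_one_of_comp_one_sub_X_eq hsym
    exact hG ▸ associated_mul_unit_right F G ((isUnit_iff_natDegree_eq_zero hG0).mpr (by omega))
  have := Fact.mk hirr
  have : Module.Finite k (AdjoinRoot F) := (AdjoinRoot.powerBasis hirr.ne_zero).finite
  have : Finite (AdjoinRoot F) := Module.finite_of_finite k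
  set α := AdjoinRoot.root F
  have hα : ∀ c : k, α ≠ algebraMap k _ c := by
    intro c hc
    have hroot : F.IsRoot c := by
      apply (algebraMap k (AdjoinRoot F)).injective
      rw [← aeval_algebraMap_apply_eq_algebraMap_eval, ← hc, AdjoinRoot.aeval_eq,
        AdjoinRoot.mk_self, map_zero]
    exact natDegree_ne_one_of_comp_one_sub_X_eq hsym
      (natDegree_eq_of_degree_eq_some (degree_eq_one_of_irreducible_of_root hirr hroot))
  have hα0 : α ≠ 0 := by simpa using hα 0
  have hα1 : 1 - α ≠ 0 := sub_ne_zero.mpr (by simpa using (hα 1).symm)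
  have hroot : aeval α F = 0 := AdjoinRoot.aeval_eq F ▸ AdjoinRoot.mk_self
  have hroot_one_sub : aeval (1 - α) F = 0 := by
    have := congrArg (aeval α) hsym
    rw [aeval_comp, hroot] at this
    simpa using this
  have hroot_inv : aeval α⁻¹ F = 0 := by
    have := invertibleOfNonzero hα0
    have := (eval₂_reverse_eq_zero_iff _ α F).mpr hroot
    rw [hrev, invOf_eq_inv] at this
    exact this
  let σ := AdjoinRoot.liftAlgHom F (Algebra.ofId k _) (1 - α) hroot_one_sub
  let τ := AdjoinRoot.liftAlgHom F (Algebra.ofId k _) α⁻¹ hroot_inv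
  have hσ : σ α = 1 - α := AdjoinRoot.liftAlgHom_root ..
  have hτ : τ α = α⁻¹ := AdjoinRoot.liftAlgHom_root ..
  have hcomm := AlgHom.apply_comm_of_finite σ τ α
  rw [hτ, map_inv₀, hσ, map_sub, map_one, hτ] at hcomm
  rw [← AdjoinRoot.mk_eq_zero]
  simp only [map_add, map_sub, map_pow, AdjoinRoot.mk_X, map_one]
  field_simp at hcomm
  linear_combination hcomm

end Field

end Polynomial

namespace ZMod

theorem exists_sq_sub_self_add_one_eq_zero {p : ℕ} [hp : Fact p.Prime] (h : p % 3 ≠ 2) :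
    ∃ r : ZMod p, r ^ 2 - r + 1 = 0 := by
  rcases (by omega : p % 3 = 0 ∨ p % 3 = 1) with h0 | h1
  · obtain rfl : p = 3 :=
      ((Nat.prime_dvd_prime_iff_eq Nat.prime_three hp.out).mp (Nat.dvd_of_mod_eq_zero h0)).symm
    exact ⟨-1, by decide +revert⟩
  · have : Fact (Nat.Prime 3) := ⟨Nat.prime_three⟩
    obtain ⟨u, hu⟩ := exists_prime_orderOf_dvd_card 3 (G := (ZMod p)ˣ)
      (by rw [ZMod.card_units]; omega)
    have hζ : IsPrimitiveRoot (u : ZMod p) 3 :=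
      IsPrimitiveRoot.coe_units_iff.mpr (hu ▸ IsPrimitiveRoot.orderOf u)
    refine ⟨-u, ?_⟩
    linear_combination (by simpa [Finset.sum_range_succ] using hζ.geom_sum_eq_zero (by norm_num) :
      1 + (u : ZMod p) + u ^ 2 = 0)

theorem mod_three_eq_two_of_irreducible {p : ℕ} [Fact p.Prime]
    (h : Irreducible (X ^ 2 - X + 1 : (ZMod p)[X])) : p % 3 = 2 := by
  by_contra hp
  obtain ⟨r, hr⟩ := exists_sq_sub_self_add_one_eq_zero hp
  have hdeg : (X ^ 2 - X + 1 : (ZMod p)[X]).natDegree = 1 := natDegree_eq_of_degree_eq_some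
    (degree_eq_one_of_irreducible_of_root h (x := r) (by simpa using hr))
  rw [natDegree_X_sq_sub_X_add_one] at hdeg
  omega

end ZMod

open Polynomial in
theorem stmt_15 (f : ℤ[X]) (hf : 0 < f.natDegree)
    (hsym : f.comp (1 - X) = f) (hrev : f.reverse = f)
    (p : ℕ) (hp : p.Prime) :
    f.map (Int.castRingHom (ZMod p)) = 0 ∨
    (∃ c : ℤ, ¬ (p : ℤ) ∣ c ∧ f = C c * (X ^ 2 - X + 1) ∧ p % 3 = 2) ∨
    (∃ A B : Polynomial (ZMod p), 0 < A.natDegree ∧ 0 < B.natDegree ∧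
      f.map (Int.castRingHom (ZMod p)) = A * B) := by
  have := Fact.mk hp
  set φ := Int.castRingHom (ZMod p)
  set F := f.map φ
  by_cases hF0 : F = 0
  · exact Or.inl hF0
  by_cases hred : ∃ A B : (ZMod p)[X], 0 < A.natDegree ∧ 0 < B.natDegree ∧ F = A * B
  · exact Or.inr (Or.inr hred)
  refine Or.inr (Or.inl ?_)
  have hsymF : F.comp (1 - X) = F := by simpa [map_comp] using congrArg (map φ) hsym
  have hcoeff0 : F.coeff 0 ≠ 0 := by
    intro h0
    have : F.natDegree ≠ 0 := fun hd => hF0 (by rw [eq_C_of_natDegree_eq_zero hd, h0, C_0])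
    have := natDegree_ne_one_of_comp_one_sub_X_eq hsymF
    exact hred (exists_mul_of_coeff_zero_eq_zero h0 (by omega))
  have hlc : φ f.leadingCoeff ≠ 0 := by rwa [← coeff_zero_reverse, hrev, ← coeff_map]
  have hdeg : F.natDegree = f.natDegree := natDegree_map_of_leadingCoeff_ne_zero φ hlc
  have hrevF : F.reverse = F := by rw [reverse_map_of_leadingCoeff_ne_zero φ hlc, hrev]
  have hirr : Irreducible F := irreducible_of_not_exists_mul (hdeg ▸ hf) hred
  have hassoc := associated_X_sq_sub_X_add_one hirr hsymF hrevF
  have hf2 : f.natDegree = 2 := by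
    rw [← hdeg, natDegree_eq_of_degree_eq (degree_eq_degree_of_associated hassoc),
      natDegree_X_sq_sub_X_add_one]
  refine ⟨f.leadingCoeff, ?_, eq_C_mul_X_sq_sub_X_add_one hsym hrev hf2,
    ZMod.mod_three_eq_two_of_irreducible (hassoc.irreducible hirr)⟩
  rwa [← ZMod.intCast_zmod_eq_zero_iff_dvd]
end

section
/- Let m ≥ 1 and suppose 6m = 3^a + 3^b for some integers a, b ≥ 1. Then the polynomial K_{6m}(x) = x^{6m} + (1-x)^{6m} + 1 is irreducible over ℚ. (Proof idea: modulo 3 one has K_{6m}(x) ≡ -(x+1)^{6m}, and K_{6m}(-1) = 2^{6m} + 2 ≡ 3 mod 9, so Eisenstein's criterion at 3 applies to K_{6m}(x-1).) -/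
/-!
Substituting `x ↦ x - 1`, Frobenius in characteristic 3 (`(y + z) ^ 3 ^ k = y ^ 3 ^ k + z ^ 3 ^ k`)
gives `K(x - 1) ≡ -x ^ (6m) mod 3`, while its constant term `K(-1) = 2 ^ (6m) + 2 ≡ 3 mod 9`.
So `K(x - 1)` is Eisenstein at 3. Its content divides the leading coefficient, hence is prime to 3,
so the primitive part is Eisenstein too, and Gauss's lemma gives irreducibility over `ℚ`.
-/

namespace Polynomial

section GCDDomain

variable {R : Type*} [CommRing R] [NormalizedGCDMonoid R] {P : Ideal R} {f : R[X]}

theorem IsEisensteinAt.primPart (hf : f.IsEisensteinAt P) (hP : P.IsPrime) :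
    f.primPart.IsEisensteinAt P := by
  have hcoeff (k : ℕ) : f.coeff k = f.content * f.primPart.coeff k := by
    conv_lhs => rw [f.eq_C_content_mul_primPart, coeff_C_mul]
  have hc : f.content ∉ P := fun hc =>
    hf.leading (P.mem_of_dvd (content_dvd_coeff f.natDegree) hc)
  refine ⟨fun h => hf.leading ?_, fun hk => ?_, fun h => hf.notMem ?_⟩
  · rw [leadingCoeff, ← natDegree_primPart, hcoeff]
    exact P.mul_mem_left _ h
  · rw [natDegree_primPart] at hk
    exact (hP.mem_or_mem (hcoeff _ ▸ hf.mem hk)).resolve_left hc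
  · rw [hcoeff]
    exact Ideal.mul_mem_left _ _ h

theorem IsEisensteinAt.irreducible_map [IsDomain R] {K : Type*} [Field K] [Algebra R K]
    [IsFractionRing R K] (hf : f.IsEisensteinAt P) (hP : P.IsPrime) (hd : 0 < f.natDegree) :
    Irreducible (f.map (algebraMap R K)) := by
  have hg := (hf.primPart hP).irreducible hP f.isPrimitive_primPart (f.natDegree_primPart ▸ hd)
  have hc : f.content ≠ 0 := by
    rw [Ne, content_eq_zero_iff]; rintro rfl; simp at hd
  rw [f.eq_C_content_mul_primPart, Polynomial.map_mul, map_C,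
    irreducible_isUnit_mul (isUnit_C.mpr (IsUnit.mk0 _ ((map_ne_zero_iff _
      (IsFractionRing.injective R K)).mpr hc)))]
  exact (f.isPrimitive_primPart.irreducible_iff_irreducible_map_fraction_map).mp hg

end GCDDomain

section Kernel

variable {R S : Type*} [CommRing R] [CommRing S] {φ : R →+* S} {f : R[X]} {n : ℕ} {u : S}

theorem natDegree_eq_of_map_eq_C_mul_X_pow (hu : u ≠ 0) (hf : f.map φ = C u * X ^ n)
    (hdeg : f.natDegree ≤ n) : f.natDegree = n := by
  refine hdeg.antisymm (le_natDegree_of_ne_zero fun h => hu ?_)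
  simpa [h] using (congr_arg (coeff · n) hf).symm

theorem isEisensteinAt_ker_of_map_eq_C_mul_X_pow (hu : u ≠ 0) (hf : f.map φ = C u * X ^ n)
    (hdeg : f.natDegree ≤ n) (h0 : f.coeff 0 ∉ RingHom.ker φ ^ 2) :
    f.IsEisensteinAt (RingHom.ker φ) := by
  have hcoeff (k : ℕ) : φ (f.coeff k) = if k = n then u else 0 := by
    simpa [coeff_C_mul, coeff_X_pow] using congr_arg (coeff · k) hf
  have hn := natDegree_eq_of_map_eq_C_mul_X_pow hu hf hdeg
  refine ⟨?_, fun hk => ?_, h0⟩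
  · rw [leadingCoeff, hn, RingHom.mem_ker, hcoeff, if_pos rfl]
    exact hu
  · rw [RingHom.mem_ker, hcoeff, if_neg (hn ▸ hk).ne]

end Kernel

end Polynomial

theorem pow_add_one_sub_pow_add_one {R : Type*} [CommRing R] [CharP R 3] (x : R) (a b : ℕ) :
    x ^ (3 ^ a + 3 ^ b) + (1 - x) ^ (3 ^ a + 3 ^ b) + 1 = -(x + 1) ^ (3 ^ a + 3 ^ b) := by
  have : Fact (Nat.Prime 3) := ⟨Nat.prime_three⟩
  have h3 : (3 : R) = 0 := by exact_mod_cast CharP.cast_eq_zero R 3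
  simp only [pow_add, sub_pow_char_pow, add_pow_char_pow, one_pow]
  linear_combination (1 + x ^ 3 ^ a * x ^ 3 ^ b) * h3

theorem not_nine_dvd_two_pow_add_two {n : ℕ} (hn : 6 ∣ n) : ¬ (9 : ℤ) ∣ 2 ^ n + 2 := by
  obtain ⟨k, rfl⟩ := hn
  intro h
  have h9 : ((2 ^ (6 * k) + 2 : ℤ) : ZMod 9) = 0 := (ZMod.intCast_zmod_eq_zero_iff_dvd _ 9).mpr h
  push_cast at h9
  rw [pow_mul, show (2 : ZMod 9) ^ 6 = 1 by decide, one_pow] at h9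
  exact absurd h9 (by decide)

open Polynomial in
theorem stmt_17_general (m a b : ℕ) (h : 6 * m = 3 ^ a + 3 ^ b) :
    Irreducible (X ^ (6 * m) + (1 - X) ^ (6 * m) + 1 : ℚ[X]) := by
  set n := 6 * m
  set F : ℤ[X] := X ^ n + (1 - X) ^ n + 1
  have hF : F.map (algebraMap ℤ ℚ) = X ^ n + (1 - X) ^ n + 1 := by simp [F]
  have hmod3 : (taylor (-1) F).map (Int.castRingHom (ZMod 3)) = C (-1) * X ^ n := by
    simp only [F, taylor_apply, h]
    simp [pow_add_one_sub_pow_add_one]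
  have hdeg : (taylor (-1) F).natDegree ≤ n := by
    rw [natDegree_taylor]; unfold F; compute_degree
  have hcoeff0 : (taylor (-1) F).coeff 0 ∉ RingHom.ker (Int.castRingHom (ZMod 3)) ^ 2 := by
    have heval : F.eval (-1) = 2 ^ n + 2 := by
      simp only [F, eval_add, eval_pow, eval_sub, eval_X, eval_one,
        (show Even n from ⟨3 * m, by omega⟩).neg_one_pow]
      norm_num
      ring
    rw [taylor_coeff_zero, heval, ZMod.ker_intCastRingHom, Ideal.span_singleton_pow,
      Ideal.mem_span_singleton]
    simpa using not_nine_dvd_two_pow_add_two (dvd_mul_right 6 m)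
  have hEis := isEisensteinAt_ker_of_map_eq_C_mul_X_pow (by decide) hmod3 hdeg hcoeff0
  have hpos : 0 < (taylor (-1) F).natDegree := by
    rw [natDegree_eq_of_map_eq_C_mul_X_pow (by decide) hmod3 hdeg, h]
    positivity
  have hirr := hEis.irreducible_map (K := ℚ) (RingHom.ker_isPrime _) hpos
  rw [← hF, ← MulEquiv.irreducible_iff (taylorEquiv (-1 : ℚ))]
  rwa [map_taylor, map_neg, map_one] at hirr

open Polynomial in
theorem stmt_17 (m a b : ℕ) (hm : 1 ≤ m) (ha : 1 ≤ a) (hb : 1 ≤ b)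
    (h : 6 * m = 3 ^ a + 3 ^ b) :
    Irreducible (X ^ (6 * m) + (1 - X) ^ (6 * m) + 1 : ℚ[X]) :=
  stmt_17_general m a b h
end

section
/- Let p be an odd prime such that K_6(x) = 2x^6 - 6x^5 + 15x^4 - 20x^3 + 15x^2 - 6x + 2 has a root in 𝔽_p. Then K_6 splits into linear factors over 𝔽_p, and moreover if α is any root of K_6 in 𝔽_p, then the six elements α, 1-α, α⁻¹, α(α-1)⁻¹, (1-α)⁻¹, (α-1)α⁻¹ are exactly the roots of K_6 in 𝔽_p (in particular α ≠ 0, 1). -/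
/-!
Since `x ↦ 1 - x` fixes `K₆`, it is a polynomial in `t = x² - x`: `K₆(x) = g(x² - x)` with
`g(t) = 2t³ + 9t² + 6t + 2`. If `α` is a root then `u = α² - α` is a root of `g`, and modulo
`g(u)` the polynomial `u² K₆` factors as `2 (X² - X - u)(uX² + X - 1)(uX² - (2u + 1)X + u)`.
The three quadratics have the root pairs `{α, 1 - α}`, `{α⁻¹, (1 - α)⁻¹}` and
`{α/(α - 1), (α - 1)/α}`, and `u ≠ 0` can be cancelled because `K₆(0) = K₆(1) = 2 ≠ 0`.
-/

open Polynomial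

section CommRing

variable {R : Type*} [CommRing R]

variable (R) in
noncomputable def K6 : R[X] :=
  2 * X ^ 6 - 6 * X ^ 5 + 15 * X ^ 4 - 20 * X ^ 3 + 15 * X ^ 2 - 6 * X + 2

theorem eval_K6 (x : R) :
    (K6 R).eval x = 2 * (x ^ 2 - x) ^ 3 + 9 * (x ^ 2 - x) ^ 2 + 6 * (x ^ 2 - x) + 2 := by
  simp only [K6, eval_add, eval_sub, eval_mul, eval_pow, eval_X, eval_ofNat]
  ring

theorem C_sq_mul_K6 (u : R) :
    C u ^ 2 * K6 R =
      C 2 * (X ^ 2 - X - C u) * (C u * X ^ 2 + X - 1) *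
          (C u * X ^ 2 - C (2 * u + 1) * X + C u) +
        C (2 * u ^ 3 + 9 * u ^ 2 + 6 * u + 2) * (X ^ 2 * (X - 1) ^ 2) := by
  simp only [K6, map_add, map_mul, map_pow, map_one, map_ofNat]
  ring

theorem C_mul_X_sub_C_mul_X_sub_C (u a b : R) :
    C u * ((X - C a) * (X - C b)) = C u * X ^ 2 - C (u * (a + b)) * X + C (u * (a * b)) := by
  simp only [map_mul, map_add]
  ring

end CommRing

section Field

variable {F : Type*} [Field F] {α : F}

def anharmonicOrbit (α : F) : Multiset F :=
  {α, 1 - α, α⁻¹, α * (α - 1)⁻¹, (1 - α)⁻¹, (α - 1) * α⁻¹}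

theorem ne_zero_of_eval_K6_eq_zero (h2 : (2 : F) ≠ 0) (hα : (K6 F).eval α = 0) : α ≠ 0 := by
  rintro rfl
  simp [eval_K6, h2] at hα

theorem ne_one_of_eval_K6_eq_zero (h2 : (2 : F) ≠ 0) (hα : (K6 F).eval α = 0) : α ≠ 1 := by
  rintro rfl
  simp [eval_K6, h2] at hα

theorem K6_eq_C_mul_prod_anharmonicOrbit (h2 : (2 : F) ≠ 0) (hα : (K6 F).eval α = 0) :
    K6 F = C 2 * ((anharmonicOrbit α).map (X - C ·)).prod := by
  have hα0 : α ≠ 0 := ne_zero_of_eval_K6_eq_zero h2 hα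
  have hα1 : α - 1 ≠ 0 := sub_ne_zero.mpr (ne_one_of_eval_K6_eq_zero h2 hα)
  have h1α : 1 - α ≠ 0 := sub_ne_zero.mpr (ne_one_of_eval_K6_eq_zero h2 hα).symm
  set u := α ^ 2 - α with hu_def
  have hu : u ≠ 0 := by
    rw [hu_def, sq, ← mul_sub_one]
    exact mul_ne_zero hα0 hα1
  have hX : X ^ 2 - X - C u = (X - C α) * (X - C (1 - α)) := by
    simp only [hu_def, map_sub, map_pow, map_one]
    ring
  have hinv : C u * X ^ 2 + X - 1 = C u * ((X - C α⁻¹) * (X - C (1 - α)⁻¹)) := by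
    rw [C_mul_X_sub_C_mul_X_sub_C]
    have hsum : u * (α⁻¹ + (1 - α)⁻¹) = -1 := by field_simp; ring
    have hprod : u * (α⁻¹ * (1 - α)⁻¹) = -1 := by field_simp; ring
    rw [hsum, hprod, map_neg, map_one]
    ring
  have hdiv : C u * X ^ 2 - C (2 * u + 1) * X + C u =
      C u * ((X - C (α * (α - 1)⁻¹)) * (X - C ((α - 1) * α⁻¹))) := by
    rw [C_mul_X_sub_C_mul_X_sub_C]
    have hsum : u * (α * (α - 1)⁻¹ + (α - 1) * α⁻¹) = 2 * u + 1 := by field_simp; ring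
    have hprod : u * (α * (α - 1)⁻¹ * ((α - 1) * α⁻¹)) = u := by field_simp
    rw [hsum, hprod]
  have hcubic : 2 * u ^ 3 + 9 * u ^ 2 + 6 * u + 2 = 0 := by rwa [eval_K6] at hα
  apply mul_left_cancel₀ (pow_ne_zero 2 (C_ne_zero.mpr hu))
  rw [C_sq_mul_K6, hcubic, map_zero, zero_mul, add_zero, hX, hinv, hdiv]
  simp only [anharmonicOrbit, Multiset.insert_eq_cons, Multiset.map_cons, Multiset.prod_cons,
    Multiset.map_singleton, Multiset.prod_singleton]
  ring

theorem splits_K6 (h2 : (2 : F) ≠ 0) (hα : (K6 F).eval α = 0) : (K6 F).Splits := by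
  rw [K6_eq_C_mul_prod_anharmonicOrbit h2 hα]
  exact (Splits.multisetProd (by simp [Splits.X_sub_C])).C_mul _

theorem roots_K6 (h2 : (2 : F) ≠ 0) (hα : (K6 F).eval α = 0) :
    (K6 F).roots = anharmonicOrbit α := by
  rw [K6_eq_C_mul_prod_anharmonicOrbit h2 hα, roots_C_mul _ h2, roots_multiset_prod_X_sub_C]

theorem eval_K6_eq_zero_iff_mem_anharmonicOrbit (h2 : (2 : F) ≠ 0) (hα : (K6 F).eval α = 0)
    {β : F} : (K6 F).eval β = 0 ↔ β ∈ anharmonicOrbit α := by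
  have hK6 : K6 F ≠ 0 := fun h ↦ h2 (by simpa [h] using (eval_K6 (0 : F)).symm)
  rw [← roots_K6 h2 hα, mem_roots hK6, IsRoot.def]

end Field

open Polynomial in
theorem stmt_19 (p : ℕ) [Fact p.Prime] (hp2 : p ≠ 2)
    (h : ∃ α : ZMod p,
      (2 * X ^ 6 - 6 * X ^ 5 + 15 * X ^ 4 - 20 * X ^ 3 + 15 * X ^ 2 - 6 * X + 2 :
        Polynomial (ZMod p)).eval α = 0) :
    Polynomial.Splits (Polynomial.map (RingHom.id (ZMod p))
      (2 * X ^ 6 - 6 * X ^ 5 + 15 * X ^ 4 - 20 * X ^ 3 + 15 * X ^ 2 - 6 * X + 2)) ∧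
    ∀ α : ZMod p,
      (2 * X ^ 6 - 6 * X ^ 5 + 15 * X ^ 4 - 20 * X ^ 3 + 15 * X ^ 2 - 6 * X + 2 :
        Polynomial (ZMod p)).eval α = 0 →
      α ≠ 0 ∧ α ≠ 1 ∧
      ∀ β : ZMod p,
        ((2 * X ^ 6 - 6 * X ^ 5 + 15 * X ^ 4 - 20 * X ^ 3 + 15 * X ^ 2 - 6 * X + 2 :
          Polynomial (ZMod p)).eval β = 0 ↔
        β ∈ ({α, 1 - α, α⁻¹, α * (α - 1)⁻¹, (1 - α)⁻¹, (α - 1) * α⁻¹} : Set (ZMod p))) := by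
  have h2 : (2 : ZMod p) ≠ 0 := Ring.two_ne_zero (by rwa [ZMod.ringChar_zmod_n])
  obtain ⟨α₀, hα₀⟩ := h
  refine ⟨by rw [map_id]; exact splits_K6 h2 hα₀, fun α hα ↦ ?_⟩
  refine ⟨ne_zero_of_eval_K6_eq_zero h2 hα, ne_one_of_eval_K6_eq_zero h2 hα, fun β ↦ ?_⟩
  exact (eval_K6_eq_zero_iff_mem_anharmonicOrbit h2 hα).trans (by simp [anharmonicOrbit])
end
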